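/- arXiv:2307.04741 — 5 statements merged into one kernel-verified Lean document; each statement's English description precedes it below -/
import Mathlib

section
/- For every positive integer n, ∑_K det(B_n[K])² = 3^{n+1} n^{2n}, where the sum is over all n-element subsets K of [n]³; equivalently, det(B_nᵀ B_n) = 3^{n+1} n^{2n}. -/
open scoped Classical

noncomputable section

namespace CLPaper

/-- The matrix `B_n`: rows indexed by `[n]³`, columns by `[n]`;
the row of `(x₁,x₂,x₃)` is `e_{x₁} + e_{x₂} + e_{x₃}`. -/
def B (n : ℕ) : Matrix (Fin n × Fin n × Fin n) (Fin n) ℤ :=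
  fun x j => (if x.1 = j then 1 else 0) + (if x.2.1 = j then 1 else 0) +
    (if x.2.2 = j then 1 else 0)

/-- `det (B_n[K])` for an `n`-element subset `K` of `[n]³` (rows enumerated by a fixed
bijection; the quantities we consider do not depend on this choice), `0` otherwise. -/
def subdet (n : ℕ) (K : Finset (Fin n × Fin n × Fin n)) : ℤ :=
  if h : K.card = n then
    ((B n).submatrix
      (fun i : Fin n => ((K.equivFin.symm (Fin.cast h.symm i)) : Fin n × Fin n × Fin n))
      id).det
  else 0

/-- The cokernel `ℤ^n / (row span of the rows of `B_n` indexed by `K`)`. -/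
def cokK (n : ℕ) (K : Finset (Fin n × Fin n × Fin n)) : Type :=
  (Fin n → ℤ) ⧸ Submodule.span ℤ ((fun x => B n x) '' (K : Set (Fin n × Fin n × Fin n)))

instance (n : ℕ) (K : Finset (Fin n × Fin n × Fin n)) : AddCommGroup (cokK n K) :=
  inferInstanceAs (AddCommGroup ((Fin n → ℤ) ⧸ Submodule.span ℤ _))

/-- The `p`-Sylow subgroup of an abelian group: the subgroup of elements annihilated
by a power of `p`. -/
def sylow (p : ℕ) (A : Type*) [AddCommGroup A] : AddSubgroup A where
  carrier := {x | ∃ k : ℕ, p ^ k • x = 0}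
  zero_mem' := ⟨0, by simp⟩
  add_mem' := by
    rintro x y ⟨k, hk⟩ ⟨l, hl⟩
    refine ⟨k + l, ?_⟩
    rw [smul_add, pow_add, mul_comm, mul_smul, hk, smul_zero, mul_comm, mul_smul, hl,
      smul_zero, add_zero]
  neg_mem' := by
    rintro x ⟨k, hk⟩
    exact ⟨k, by rw [smul_neg, hk, neg_zero]⟩

/-- Number of surjective homomorphisms from `A` to `G`. -/
def numSur (A G : Type*) [AddCommGroup A] [AddCommGroup G] : ℕ :=
  Nat.card {f : A →+ G // Function.Surjective f}

end CLPaper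

open CLPaper Matrix

variable {n : ℕ}

lemma prod3 (f g h : Fin n → ℤ) :
    ∑ x : Fin n × Fin n × Fin n, f x.1 * g x.2.1 * h x.2.2
    = (∑ a, f a) * (∑ a, g a) * (∑ a, h a) := by
  simp only [Fintype.sum_prod_type, ← Finset.sum_mul, ← Finset.mul_sum]

lemma expand (f g : Fin n → ℤ) :
    ∑ x : Fin n × Fin n × Fin n, (f x.1 + f x.2.1 + f x.2.2) * (g x.1 + g x.2.1 + g x.2.2)
    = 3 * (∑ a, f a * g a) * n^2 + 6 * ((∑ a, f a) * (∑ a, g a)) * n := by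
  have key : ∀ x : Fin n × Fin n × Fin n,
      (f x.1 + f x.2.1 + f x.2.2) * (g x.1 + g x.2.1 + g x.2.2)
      = f x.1 * g x.1 + f x.2.1 * g x.2.1 + f x.2.2 * g x.2.2
      + f x.1 * g x.2.1 + f x.1 * g x.2.2 + g x.1 * f x.2.1
      + f x.2.1 * g x.2.2 + g x.1 * f x.2.2 + g x.2.1 * f x.2.2 := fun x => by ring
  rw [Finset.sum_congr rfl fun x _ => key x]
  simp only [Finset.sum_add_distrib]
  have H1 : ∑ x : Fin n × Fin n × Fin n, f x.1 * g x.1 = (∑ a, f a * g a) * n * n := by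
    simpa using prod3 (fun a => f a * g a) (fun _ => 1) (fun _ => 1)
  have H2 : ∑ x : Fin n × Fin n × Fin n, f x.2.1 * g x.2.1 = ((n:ℤ) * ∑ a, f a * g a) * n := by
    simpa using prod3 (fun _ => 1) (fun a => f a * g a) (fun _ => 1)
  have H3 : ∑ x : Fin n × Fin n × Fin n, f x.2.2 * g x.2.2 = (n:ℤ) * (n:ℤ) * ∑ a, f a * g a := by
    simpa using prod3 (fun _ => 1) (fun _ => 1) (fun a => f a * g a)
  have H4 : ∑ x : Fin n × Fin n × Fin n, f x.1 * g x.2.1 = (∑ a, f a) * (∑ a, g a) * n := by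
    simpa using prod3 f g (fun _ => 1)
  have H5 : ∑ x : Fin n × Fin n × Fin n, f x.1 * g x.2.2 = (∑ a, f a) * (n:ℤ) * ∑ a, g a := by
    simpa using prod3 f (fun _ => 1) g
  have H6 : ∑ x : Fin n × Fin n × Fin n, g x.1 * f x.2.1 = ((∑ a, g a) * ∑ a, f a) * n := by
    simpa using prod3 g f (fun _ => 1)
  have H7 : ∑ x : Fin n × Fin n × Fin n, f x.2.1 * g x.2.2 = ((n:ℤ) * ∑ a, f a) * ∑ a, g a := by
    simpa using prod3 (fun _ => 1) f g
  have H8 : ∑ x : Fin n × Fin n × Fin n, g x.1 * f x.2.2 = (∑ a, g a) * (n:ℤ) * ∑ a, f a := by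
    simpa using prod3 g (fun _ => 1) f
  have H9 : ∑ x : Fin n × Fin n × Fin n, g x.2.1 * f x.2.2 = ((n:ℤ) * ∑ a, g a) * ∑ a, f a := by
    simpa using prod3 (fun _ => 1) g f
  rw [H1, H2, H3, H4, H5, H6, H7, H8, H9]
  ring

lemma step1 (A : Matrix (Fin n × Fin n × Fin n) (Fin n) ℤ) :
    (Aᵀ * A).det = ∑ r : Fin n → Fin n × Fin n × Fin n,
      (∏ j, A (r j) j) * (A.submatrix r id).det := by
  have h1 : (Aᵀ * A) = Matrix.of (fun j => ∑ x : Fin n × Fin n × Fin n, A x j • A x) := by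
    ext j k; simp [Matrix.mul_apply, Finset.sum_apply, smul_eq_mul]
  rw [h1]
  show ((Matrix.detRowAlternating (R := ℤ) (n := Fin n)).toMultilinearMap
    fun j => ∑ x : Fin n × Fin n × Fin n, A x j • A x) = _
  rw [(Matrix.detRowAlternating (R := ℤ) (n := Fin n)).toMultilinearMap.map_sum
    (fun j x => A x j • A x)]
  refine Finset.sum_congr rfl fun r _ => ?_
  rw [(Matrix.detRowAlternating (R := ℤ) (n := Fin n)).toMultilinearMap.map_smul_univ
    (fun j => A (r j) j) (fun j => A (r j))]
  rw [smul_eq_mul]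
  rfl

lemma step2 (A : Matrix (Fin n × Fin n × Fin n) (Fin n) ℤ) :
    (Aᵀ * A).det = ∑ K ∈ Finset.univ.filter
        (fun K : Finset (Fin n × Fin n × Fin n) => K.card = n),
      ∑ r ∈ Finset.univ.filter (fun r : Fin n → Fin n × Fin n × Fin n =>
          Function.Injective r ∧ Finset.image r Finset.univ = K),
        (∏ j, A (r j) j) * (A.submatrix r id).det := by
  rw [step1]
  have hinj : ∑ r : Fin n → Fin n × Fin n × Fin n,
      (∏ j, A (r j) j) * (A.submatrix r id).det
      = ∑ r ∈ Finset.univ.filter (fun r : Fin n → Fin n × Fin n × Fin n =>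
          Function.Injective r), (∏ j, A (r j) j) * (A.submatrix r id).det := by
    refine (Finset.sum_filter_of_ne ?_).symm
    intro r _ h
    by_contra hni
    rw [Function.not_injective_iff] at hni
    obtain ⟨a, b, hab, hne⟩ := hni
    have : (A.submatrix r id).det = 0 :=
      Matrix.det_zero_of_row_eq hne (by ext k; simp [Matrix.submatrix_apply, hab])
    exact h (by rw [this, mul_zero])
  rw [hinj]
  rw [← Finset.sum_fiberwise_of_maps_to
    (g := fun r : Fin n → Fin n × Fin n × Fin n => Finset.image r Finset.univ)
    (t := Finset.univ.filter (fun K : Finset (Fin n × Fin n × Fin n) => K.card = n)) ?_]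
  · refine Finset.sum_congr rfl fun K _ => Finset.sum_congr ?_ fun _ _ => rfl
    rw [Finset.filter_filter]
  · intro r hr
    simp only [Finset.mem_filter, Finset.mem_univ, true_and] at hr ⊢
    rw [Finset.card_image_of_injective _ hr, Finset.card_univ, Fintype.card_fin]

lemma step3 (A : Matrix (Fin n × Fin n × Fin n) (Fin n) ℤ)
    (K : Finset (Fin n × Fin n × Fin n)) (hK : K.card = n) :
    (∑ r ∈ Finset.univ.filter (fun r : Fin n → Fin n × Fin n × Fin n =>
        Function.Injective r ∧ Finset.image r Finset.univ = K),
      (∏ j, A (r j) j) * (A.submatrix r id).det)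
    = ((A.submatrix
        (fun i : Fin n => ((K.equivFin.symm (Fin.cast hK.symm i)) : Fin n × Fin n × Fin n))
        id).det) ^ 2 := by
  set e : Fin n → Fin n × Fin n × Fin n :=
    fun i => ((K.equivFin.symm (Fin.cast hK.symm i)) : Fin n × Fin n × Fin n) with he
  have he_mem : ∀ i, e i ∈ K := fun i => (K.equivFin.symm (Fin.cast hK.symm i)).2
  have he_inj : Function.Injective e := by
    intro a b h
    have h2 := K.equivFin.symm.injective (Subtype.ext h)
    simpa [Fin.ext_iff] using h2
  have he_inv : ∀ (y) (hy : y ∈ K), e (Fin.cast hK (K.equivFin ⟨y, hy⟩)) = y := by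
    intro y hy
    show ((K.equivFin.symm (Fin.cast hK.symm (Fin.cast hK (K.equivFin ⟨y, hy⟩)))) :
      Fin n × Fin n × Fin n) = y
    have h1 : Fin.cast hK.symm (Fin.cast hK (K.equivFin ⟨y, hy⟩)) = K.equivFin ⟨y, hy⟩ := by
      apply Fin.ext; simp
    rw [h1, Equiv.symm_apply_apply]
  set d : ℤ := (A.submatrix e id).det with hd
  have key : ∀ r (hr : r ∈ Finset.univ.filter (fun r : Fin n → Fin n × Fin n × Fin n =>
      Function.Injective r ∧ Finset.image r Finset.univ = K)), ∀ i, r i ∈ K := by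
    intro r hr i
    simp only [Finset.mem_filter] at hr
    rw [← hr.2.2]
    exact Finset.mem_image.mpr ⟨i, Finset.mem_univ i, rfl⟩
  have hmem : ∀ σ : Equiv.Perm (Fin n),
      (e ∘ σ) ∈ Finset.univ.filter (fun r : Fin n → Fin n × Fin n × Fin n =>
        Function.Injective r ∧ Finset.image r Finset.univ = K) := by
    intro σ
    simp only [Finset.mem_filter, Finset.mem_univ, true_and]
    refine ⟨he_inj.comp σ.injective, Finset.eq_of_subset_of_card_le ?_ ?_⟩
    · intro x hx
      obtain ⟨i, _, rfl⟩ := Finset.mem_image.mp hx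
      exact he_mem _
    · rw [Finset.card_image_of_injective _ (he_inj.comp σ.injective),
        Finset.card_univ, Fintype.card_fin, hK]
  have hgroup : (∑ r ∈ Finset.univ.filter (fun r : Fin n → Fin n × Fin n × Fin n =>
        Function.Injective r ∧ Finset.image r Finset.univ = K),
      (∏ j, A (r j) j) * (A.submatrix r id).det)
      = ∑ σ : Equiv.Perm (Fin n), (∏ j, A (e (σ j)) j) * (A.submatrix (e ∘ σ) id).det := by
    refine Finset.sum_bij' (i := fun r hr => Equiv.ofBijective
        (fun i => Fin.cast hK (K.equivFin ⟨r i, key r hr i⟩))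
        (Finite.injective_iff_bijective.mp (fun a b h =>
          (Finset.mem_filter.mp hr).2.1 (congrArg Subtype.val
            (K.equivFin.injective (Fin.ext (by simpa using congrArg Fin.val h)))))))
      (j := fun σ _ => e ∘ σ) ?_ ?_ ?_ ?_ ?_
    · intro r hr; exact Finset.mem_univ _
    · intro σ _; exact hmem σ
    · intro r hr
      funext i
      exact he_inv (r i) (key r hr i)
    · intro σ _
      ext i
      show (Fin.cast hK (K.equivFin ⟨(e ∘ σ) i, key _ (hmem σ) i⟩) : ℕ) = (σ i : ℕ)
      have h3 : (⟨(e ∘ σ) i, key _ (hmem σ) i⟩ : K)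
          = K.equivFin.symm (Fin.cast hK.symm (σ i)) := Subtype.ext rfl
      rw [h3, Equiv.apply_symm_apply]
      simp
    · intro r hr
      have h4 : e ∘ (fun i => Fin.cast hK (K.equivFin ⟨r i, key r hr i⟩)) = r := by
        funext i
        exact he_inv (r i) (key r hr i)
      conv_lhs => rw [← h4]
      rfl
  rw [hgroup]
  have hsub : ∀ σ : Equiv.Perm (Fin n),
      (A.submatrix (e ∘ σ) id).det = ((Equiv.Perm.sign σ : ℤ) : ℤ) * d := by
    intro σ
    have h5 : A.submatrix (e ∘ σ) id = (A.submatrix e id).submatrix σ id := by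
      rw [Matrix.submatrix_submatrix]; rfl
    rw [h5, Matrix.det_permute, hd]
    norm_cast
  calc ∑ σ : Equiv.Perm (Fin n), (∏ j, A (e (σ j)) j) * (A.submatrix (e ∘ σ) id).det
      = (∑ σ : Equiv.Perm (Fin n), ((Equiv.Perm.sign σ : ℤ) : ℤ) * ∏ j, A (e (σ j)) j) * d := by
        rw [Finset.sum_mul]
        refine Finset.sum_congr rfl fun σ _ => ?_
        rw [hsub σ]; ring
    _ = d * d := by
        congr 1
        rw [hd, Matrix.det_apply']
        rfl
    _ = d ^ 2 := by ring

lemma detJ (hn : 0 < n) (M : Matrix (Fin n) (Fin n) ℤ)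
    (hM : ∀ j k, M j k = if j = k then (3*(n:ℤ)^2 + 6*n) else 6*(n:ℤ)) :
    M.det = 3 ^ (n + 1) * (n : ℤ) ^ (2 * n) := by
  have hn' : (n:ℚ) ≠ 0 := Nat.cast_ne_zero.mpr hn.ne'
  have hmap : M.map (Int.cast : ℤ → ℚ)
      = (3*(n:ℚ)^2) • (1 + Matrix.replicateCol Unit (fun _ : Fin n => (2:ℚ)/n) * Matrix.replicateRow Unit (fun _ : Fin n => (1:ℚ))) := by
    ext j k
    simp only [Matrix.map_apply, hM j k, Matrix.smul_apply, Matrix.add_apply,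
      Matrix.mul_apply, Matrix.replicateCol_apply, Matrix.replicateRow_apply, Finset.univ_unique,
      Finset.sum_singleton, Matrix.one_apply, smul_eq_mul]
    rcases eq_or_ne j k with h | h
    · simp only [h, if_pos rfl]
      push_cast
      field_simp
      ring
    · simp only [h, if_neg h]
      push_cast
      field_simp
      ring
  have hdet : ((M.det : ℤ) : ℚ) = (3*(n:ℚ)^2)^n * 3 := by
    rw [show ((M.det : ℤ) : ℚ) = (Int.castRingHom ℚ) M.det from rfl,
      RingHom.map_det (Int.castRingHom ℚ) M]
    have : (Int.castRingHom ℚ).mapMatrix M = M.map (Int.cast : ℤ → ℚ) := rfl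
    rw [this, hmap, Matrix.det_smul, Matrix.det_one_add_replicateCol_mul_replicateRow, Fintype.card_fin]
    congr 1
    simp only [dotProduct, Finset.sum_const, Finset.card_univ, Fintype.card_fin,
      nsmul_eq_mul, one_mul]
    field_simp
    ring
  have hrhs : ((3 ^ (n + 1) * (n : ℤ) ^ (2 * n) : ℤ) : ℚ) = (3*(n:ℚ)^2)^n * 3 := by
    push_cast
    rw [mul_pow, pow_mul]
    ring
  exact_mod_cast hdet.trans hrhs.symm

lemma entry (j k : Fin n) :
    ((B n)ᵀ * B n) j k = if j = k then (3*(n:ℤ)^2 + 6*n) else 6*(n:ℤ) := by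
  have h0 : ((B n)ᵀ * B n) j k = ∑ x : Fin n × Fin n × Fin n, B n x j * B n x k := by
    simp [Matrix.mul_apply, Matrix.transpose_apply]
  rw [h0]
  have hB : ∀ x : Fin n × Fin n × Fin n, ∀ l : Fin n, B n x l =
      (fun a => if a = l then (1:ℤ) else 0) x.1 + (fun a => if a = l then (1:ℤ) else 0) x.2.1
      + (fun a => if a = l then (1:ℤ) else 0) x.2.2 := fun x l => rfl
  simp only [hB]
  rw [expand (fun a => if a = j then (1:ℤ) else 0) (fun a => if a = k then (1:ℤ) else 0)]
  have hs : ∑ a : Fin n, (if a = j then (1:ℤ) else 0) = 1 := by simp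
  have ht : ∑ a : Fin n, (if a = k then (1:ℤ) else 0) = 1 := by simp
  have hst : ∑ a : Fin n, (if a = j then (1:ℤ) else 0) * (if a = k then (1:ℤ) else 0)
      = if j = k then 1 else 0 := by
    rcases eq_or_ne j k with h | h
    · subst h; simp
    · simp only [ite_mul, one_mul, zero_mul]
      rw [Finset.sum_eq_zero, if_neg h]
      intro a _
      rcases eq_or_ne a j with h2 | h2
      · simp [h2, h]
      · simp [h2]
  rw [hs, ht, hst]
  rcases eq_or_ne j k with h | h
  · simp [h]
  · simp [h]


/-- `∑_K det(B_n[K])² = 3^{n+1} n^{2n}` over all `n`-element subsets `K` of `[n]³`;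
equivalently `det(B_nᵀ B_n) = 3^{n+1} n^{2n}`. -/
theorem sum_subdet_sq (n : ℕ) (hn : 0 < n) :
    (∑ K ∈ Finset.univ.filter
        (fun K : Finset (Fin n × Fin n × Fin n) => K.card = n), (subdet n K) ^ 2)
      = 3 ^ (n + 1) * (n : ℤ) ^ (2 * n) ∧
    ((B n)ᵀ * B n).det = 3 ^ (n + 1) * (n : ℤ) ^ (2 * n) := by
  have hM : ∀ j k, ((B n)ᵀ * B n) j k = if j = k then (3*(n:ℤ)^2 + 6*n) else 6*(n:ℤ) :=
    fun j k => entry j k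
  have h2 : ((B n)ᵀ * B n).det = 3 ^ (n + 1) * (n : ℤ) ^ (2 * n) := detJ hn _ hM
  have h1 : ((B n)ᵀ * B n).det = ∑ K ∈ Finset.univ.filter
      (fun K : Finset (Fin n × Fin n × Fin n) => K.card = n), (subdet n K) ^ 2 := by
    rw [step2]
    refine Finset.sum_congr rfl fun K hK => ?_
    have hKc : K.card = n := (Finset.mem_filter.mp hK).2
    rw [step3 (B n) K hKc, subdet, dif_pos hKc]
  exact ⟨h1.symm.trans h2, h2⟩
end
end

section
/- For every finite abelian group G and every q ∈ G^n, det(B_{n,q}ᵀ B_{n,q}) = 3^n · det(M_q) · ∏_{a∈G_+} m_a^{n_a − 1}. Consequently, for the determinantal random matrix A_n one has ℙ(A_n q = 0) = (1/3) n^{−2n} det(M_q) ∏_{a∈G_+} m_a^{n_a−1}. -/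
open scoped Classical

noncomputable section

namespace CLPaper

open Matrix

variable {G : Type*} [AddCommGroup G] [Fintype G]

/-- The submatrix `B_{n,q}` of `B_n` consisting of the rows indexed by
`I_q = {(x₁,x₂,x₃) : q_{x₁} + q_{x₂} + q_{x₃} = 0}`. -/
def Bq (n : ℕ) (q : Fin n → G) :
    Matrix {x : Fin n × Fin n × Fin n // q x.1 + q x.2.1 + q x.2.2 = 0} (Fin n) ℤ :=
  fun x j => B n x.1 j

/-- The Gram matrix `B_{n,q}ᵀ B_{n,q}`. -/
def gram (n : ℕ) (q : Fin n → G) : Matrix (Fin n) (Fin n) ℤ :=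
  (Bq n q)ᵀ * Bq n q

/-- `n_a(q) = #{i : q_i = a}`. -/
def cnt {n : ℕ} (q : Fin n → G) (a : G) : ℕ :=
  (Finset.univ.filter (fun i => q i = a)).card

/-- `m_a = ∑_b n_b n_{-a-b}` associated to a counts vector `n̄ : G → ℕ`. -/
def mOf (nbar : G → ℕ) (a : G) : ℕ :=
  ∑ b : G, nbar b * nbar (-a - b)

/-- The matrix `M` indexed by `G₊ = {a : n_a > 0}`, with
`M(a,a) = 2 n_a n_{-2a} + m_a` and `M(a,b) = 2 √(n_a n_b) n_{-a-b}` for `a ≠ b`. -/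
def Mmat (nbar : G → ℕ) :
    Matrix {a : G // 0 < nbar a} {a : G // 0 < nbar a} ℝ :=
  fun a b =>
    if (a : G) = (b : G) then
      2 * (nbar (a : G) : ℝ) * (nbar (-(2 • (a : G))) : ℝ) + (mOf nbar (a : G) : ℝ)
    else
      2 * Real.sqrt ((nbar (a : G) : ℝ) * (nbar (b : G) : ℝ)) * (nbar (-(a : G) - b) : ℝ)

/-- The set `S(n̄)` of vectors `q ∈ G^n` with the prescribed counts. -/
def Sset (n : ℕ) (nbar : G → ℕ) : Finset (Fin n → G) :=
  Finset.univ.filter (fun q => ∀ a : G, cnt q a = nbar a)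

/-- `E(n̄) = ∑_{q ∈ S(n̄)} det(B_{n,q}ᵀ B_{n,q}) / (3^{n+1} n^{2n})`. -/
def Eval (n : ℕ) (nbar : G → ℕ) : ℝ :=
  (∑ q ∈ Sset n nbar, ((gram n q).det : ℝ)) / ((3 : ℝ) ^ (n + 1) * (n : ℝ) ^ (2 * n))

/-- Kullback–Leibler divergence of two probability vectors on `G` (natural log;
terms with `ν a = 0` contribute `0`). -/
def klDiv (ν μ : G → ℝ) : ℝ :=
  ∑ a : G, if ν a = 0 then 0 else ν a * Real.log (ν a / μ a)

/-- `ν_{n̄}(a) = n_a / n`. -/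
def nuOf (n : ℕ) (nbar : G → ℕ) : G → ℝ := fun a => (nbar a : ℝ) / n

/-- `μ_{n̄}(a) = m_a / n²`. -/
def muOf (n : ℕ) (nbar : G → ℕ) : G → ℝ := fun a => (mOf nbar a : ℝ) / (n : ℝ) ^ 2

/-- `t_n = 2C √(|G| n log n)`. -/
def tSeq (G : Type*) [Fintype G] (C : ℝ) (n : ℕ) : ℝ :=
  2 * C * Real.sqrt ((Fintype.card G) * n * Real.log n)

/-- `r_n = 4C |G| log n`. -/
def rSeq (G : Type*) [Fintype G] (C : ℝ) (n : ℕ) : ℝ :=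
  4 * C * (Fintype.card G) * Real.log n

/-- `n̄ ∈ D_n`: the counts sum to `n` and the support generates `G`. -/
def memD (n : ℕ) (nbar : G → ℕ) : Prop :=
  (∑ a : G, nbar a = n) ∧ AddSubgroup.closure {a : G | 0 < nbar a} = ⊤

/-- `n̄ ∈ D_n'`: moreover `m_a > 0` for all `a ∈ G₊`. -/
def memD' (n : ℕ) (nbar : G → ℕ) : Prop :=
  memD n nbar ∧ ∀ a : G, 0 < nbar a → 0 < mOf nbar a

/-- `u_H(g) = 1/|H|` for `g ∈ H` and `0` otherwise. -/
def uH (H : AddSubgroup G) : G → ℝ :=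
  fun g => if g ∈ H then (Nat.card H : ℝ)⁻¹ else 0

/-- `n̄ ∈ B(n,H)`. -/
def memB (C : ℝ) (n : ℕ) (H : AddSubgroup G) (nbar : G → ℕ) : Prop :=
  memD' n nbar ∧ (∀ a : G, |(nbar a : ℝ) - n * uH H a| ≤ tSeq G C n) ∧
    (∑ a ∈ Finset.univ.filter (fun a : G => a ∉ H), (nbar a : ℝ)) ≤ rSeq G C n

end CLPaper

/-!
Each row `e_{x₁} + e_{x₂} + e_{x₃}` of `B_{n,q}` splits into three summands, and rotating the
coordinates of `x` preserves `I_q`, so the three contribute equally to the Gram matrix: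
its entries are `3 δ_{ij} m_{q_i} + 6 n_{-q_i-q_j}`. Thus `B_{n,q}ᵀ B_{n,q} = 3 (D + E C)`, where
`D = diag(m_{q_i})` is constant on the fibres of `q`, `E` is the incidence matrix of `q` and
`C a j = 2 n_{-a-q_j}`.
The Weinstein–Aronszajn identity `det (1 + X Y) = det (1 + Y X)` moves the determinant to the
`G₊ × G₊` matrix `diag(m_a) + (2 n_{-a-b} n_b)`, each fibre contributing a factor
`m_a^{n_a - 1}` (first for `m_a ≠ 0`, then in general by continuity), and conjugation by
`diag(√n_a)` turns that matrix into `M_q`.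
-/

namespace Matrix

open Finset

variable {ι κ 𝕜 : Type*} [Fintype ι] [Fintype κ] [DecidableEq ι] [DecidableEq κ]

theorem diagonal_mul_diagonal_inv [Field 𝕜] {d : ι → 𝕜} (hd : ∀ i, d i ≠ 0) :
    diagonal d * diagonal d⁻¹ = 1 := by
  rw [diagonal_mul_diagonal, ← diagonal_one]
  exact congrArg diagonal (funext fun i => mul_inv_cancel₀ (hd i))

theorem det_diagonal_comp_add_submatrix_of_ne_zero [Field 𝕜] {f : ι → κ}
    (hf : Function.Surjective f) {d : κ → 𝕜} (hd : ∀ a, d a ≠ 0) (C : Matrix κ ι 𝕜) :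
    det (diagonal (d ∘ f) + C.submatrix f id) =
      (∏ a, d a ^ (#{i | f i = a} - 1)) *
        det (diagonal d + of fun a b => ∑ i with f i = b, C a i) := by
  set E : Matrix ι κ 𝕜 := of fun i a => if f i = a then 1 else 0
  have hEC : C.submatrix f id = E * C := by
    ext i j; simp [E, mul_apply]
  have hCE : (of fun a b => ∑ i with f i = b, C a i) = C * E := by
    ext a b; simp [E, mul_apply, sum_filter]
  have hDE : diagonal (d ∘ f)⁻¹ * E = E * diagonal d⁻¹ := by
    ext i a; by_cases h : f i = a <;> simp [E, h]
  have hsplit : diagonal (d ∘ f) + E * C =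
      diagonal (d ∘ f) * (1 + diagonal (d ∘ f)⁻¹ * E * C) := by
    rw [Matrix.mul_add, Matrix.mul_one, ← Matrix.mul_assoc, ← Matrix.mul_assoc,
      diagonal_mul_diagonal_inv (d := d ∘ f) fun i => hd (f i), Matrix.one_mul]
  have hmerge : 1 + C * E * diagonal d⁻¹ = (diagonal d + C * E) * diagonal d⁻¹ := by
    rw [Matrix.add_mul, diagonal_mul_diagonal_inv hd]
  have hprod : ∏ i, d (f i) = ∏ a, d a ^ #{i | f i = a} := by
    rw [prod_comp, image_univ_of_surjective hf]
  rw [hEC, hCE, hsplit, det_mul, det_one_add_mul_comm (diagonal (d ∘ f)⁻¹ * E), hDE,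
    ← Matrix.mul_assoc, hmerge, det_mul, det_diagonal, det_diagonal, Function.comp_def, hprod,
    mul_left_comm, ← prod_mul_distrib]
  refine mul_comm _ _ |>.trans (congrArg (· * _) (prod_congr rfl fun a _ => ?_))
  obtain ⟨i, rfl⟩ := hf a
  rw [Pi.inv_apply, pow_sub₀ _ (hd _) (card_pos.2 ⟨i, by simp⟩), pow_one]

open Filter Topology in
theorem det_diagonal_comp_add_submatrix [NontriviallyNormedField 𝕜] {f : ι → κ}
    (hf : Function.Surjective f) (d : κ → 𝕜) (C : Matrix κ ι 𝕜) :
    det (diagonal (d ∘ f) + C.submatrix f id) =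
      (∏ a, d a ^ (#{i | f i = a} - 1)) *
        det (diagonal d + of fun a b => ∑ i with f i = b, C a i) := by
  have hshift : ∀ᶠ t in 𝓝[≠] (0 : 𝕜), ∀ a, d a + t ≠ 0 := by
    refine eventually_all.2 fun a => ?_
    by_cases ha : d a = 0
    · filter_upwards [self_mem_nhdsWithin] with t ht using by simpa [ha] using ht
    · refine (Continuous.continuousAt (f := fun t => d a + t) (by fun_prop)).eventually_ne
        ?_ |>.filter_mono nhdsWithin_le_nhds
      simpa using ha
  have hL : Continuous fun t => det (diagonal ((d · + t) ∘ f) + C.submatrix f id) := by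
    fun_prop
  have hR : Continuous fun t => (∏ a, (d a + t) ^ (#{i | f i = a} - 1)) *
      det (diagonal (d · + t) + of fun a b => ∑ i with f i = b, C a i) := by
    fun_prop
  have h0 := tendsto_nhds_unique_of_eventuallyEq
    ((hL.tendsto 0).mono_left nhdsWithin_le_nhds) ((hR.tendsto 0).mono_left nhdsWithin_le_nhds)
    (hshift.mono fun t ht => det_diagonal_comp_add_submatrix_of_ne_zero hf ht C)
  simpa using h0

end Matrix

namespace CLPaper

open Matrix Finset

section Counting

variable {G : Type*} {n : ℕ} (q : Fin n → G)

theorem cnt_pos (i : Fin n) : 0 < cnt q (q i) :=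
  card_pos.2 ⟨i, by simp⟩

def toSupport (i : Fin n) : {a : G // 0 < cnt q a} := ⟨q i, cnt_pos q i⟩

theorem toSupport_surjective : Function.Surjective (toSupport q) := fun a => by
  obtain ⟨i, hi⟩ := card_pos.1 a.2
  exact ⟨i, Subtype.ext (mem_filter.1 hi).2⟩

theorem card_toSupport_fiber (a : {a : G // 0 < cnt q a}) :
    #{i | toSupport q i = a} = cnt q a :=
  congrArg card (filter_congr fun _ _ => Subtype.ext_iff)

theorem sum_boole_eq_cnt {P : Fin n → Prop} [DecidablePred P] {c : G}
    (hP : ∀ z, P z ↔ q z = c) :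
    ∑ z, (if P z then (1 : ℤ) else 0) = cnt q c := by
  simp only [hP, sum_boole, cnt]

theorem sum_comp_eq_sum_cnt_mul [Fintype G] {R : Type*} [NonAssocSemiring R] (F : G → R) :
    ∑ i, F (q i) = ∑ a, cnt q a * F a := by
  rw [← sum_fiberwise univ q]
  refine sum_congr rfl fun a _ => ?_
  rw [sum_congr rfl fun i hi => by rw [(mem_filter.1 hi).2], sum_const, cnt, nsmul_eq_mul]

theorem sum_sum_boole_add_add_eq_zero [AddCommGroup G] [Fintype G] (a : G) :
    ∑ y, ∑ z, (if a + q y + q z = 0 then (1 : ℤ) else 0) = mOf (cnt q) a := by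
  have hinner : ∀ y, ∑ z, (if a + q y + q z = 0 then (1 : ℤ) else 0) = cnt q (-a - q y) :=
    fun y => sum_boole_eq_cnt q fun z => by rw [add_eq_zero_iff_eq_neg', neg_add']
  rw [sum_congr rfl fun y _ => hinner y, mOf]
  push_cast
  exact sum_comp_eq_sum_cnt_mul q fun b => (cnt q (-a - b) : ℤ)

theorem sum_toSupport_fiber [AddCommGroup G] (a b : {a : G // 0 < cnt q a}) :
    ∑ i with toSupport q i = b, 2 * (cnt q (-(a : G) - q i) : ℝ) =
      2 * (cnt q (-(a : G) - b) : ℝ) * cnt q b := by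
  rw [sum_congr rfl fun i hi => by rw [show q i = b from congrArg Subtype.val (mem_filter.1 hi).2],
    sum_const, card_toSupport_fiber, nsmul_eq_mul, mul_comm]

end Counting

section Gram

variable {G : Type*} [AddCommGroup G] [Fintype G] {n : ℕ} (q : Fin n → G)

theorem B_rotate (x : Fin n × Fin n × Fin n) (j : Fin n) :
    B n (x.2.1, x.2.2, x.1) j = B n x j :=
  (add_rotate _ _ _).symm

theorem sum_B_of_fst_eq (i j : Fin n) :
    ∑ x, (if q x.1 + q x.2.1 + q x.2.2 = 0 ∧ x.1 = i then B n x j else 0) =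
      (if i = j then (mOf (cnt q) (q i) : ℤ) else 0) + 2 * cnt q (-(q i) - q j) := by
  simp only [B, Fintype.sum_prod_type, and_comm (b := _ = i), ite_and, sum_ite_irrel,
    sum_const_zero, sum_ite_eq', mem_univ, if_true]
  simp only [ite_add_zero, sum_add_distrib, ← ite_and]
  simp only [and_comm (a := _ = (0 : G)), ite_and, sum_ite_irrel, sum_const_zero, sum_ite_eq',
    mem_univ, if_true]
  have hj : ∑ z, (if q i + q j + q z = 0 then (1 : ℤ) else 0) = cnt q (-(q i) - q j) :=
    sum_boole_eq_cnt q fun z => by rw [add_eq_zero_iff_eq_neg', neg_add']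
  have hj' : ∑ y, (if q i + q y + q j = 0 then (1 : ℤ) else 0) = cnt q (-(q i) - q j) :=
    sum_boole_eq_cnt q fun y => by rw [add_right_comm, add_eq_zero_iff_eq_neg', neg_add']
  rw [sum_sum_boole_add_add_eq_zero, hj, hj']
  ring

theorem gram_apply (i j : Fin n) :
    gram n q i j = (if i = j then 3 * (mOf (cnt q) (q i) : ℤ) else 0)
      + 6 * cnt q (-(q i) - q j) := by
  let T : (Fin n × Fin n × Fin n → Fin n) → ℤ := fun π =>
    ∑ x, if q x.1 + q x.2.1 + q x.2.2 = 0 ∧ π x = i then B n x j else 0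
  have hsplit : gram n q i j = T (·.1) + T (·.2.1) + T (·.2.2) := by
    rw [gram, mul_apply]
    simp only [transpose_apply, Bq]
    rw [← sum_subtype {x : Fin n × Fin n × Fin n | q x.1 + q x.2.1 + q x.2.2 = 0} (by simp)
      (fun x => B n x i * B n x j), sum_filter]
    simp only [T, ← sum_add_distrib, ite_and]
    refine sum_congr rfl fun x _ => ?_
    by_cases hx : q x.1 + q x.2.1 + q x.2.2 = 0
    · simp only [hx, if_true, B, add_mul, ite_mul, one_mul, zero_mul]
    · simp only [hx, if_false, add_zero]
  have hrot : ∀ π, T π = T fun x => π (x.2.1, x.2.2, x.1) := fun π => by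
    let rot : Fin n × Fin n × Fin n ≃ Fin n × Fin n × Fin n :=
      ⟨fun x => (x.2.1, x.2.2, x.1), fun x => (x.2.2, x.1, x.2.1), fun _ => rfl, fun _ => rfl⟩
    refine (Fintype.sum_equiv rot _ _ fun x => ?_).symm
    dsimp only [rot, Equiv.coe_fn_mk]
    rw [B_rotate, ← add_rotate (q x.1)]
  have hfst : T (·.1) =
      (if i = j then (mOf (cnt q) (q i) : ℤ) else 0) + 2 * cnt q (-(q i) - q j) :=
    sum_B_of_fst_eq q i j
  have h2 : T (·.2.1) = T (·.1) := (hrot (·.1)).symm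
  have h3 : T (·.2.2) = T (·.1) := (hrot (·.2.1)).symm.trans h2
  rw [hsplit, h2, h3, hfst]
  split_ifs <;> ring

end Gram

section Reduction

variable {G : Type*} [AddCommGroup G] [Fintype G]

theorem Mmat_mul_diagonal_sqrt (nbar : G → ℕ) :
    Mmat nbar * diagonal (fun a : {a : G // 0 < nbar a} => √(nbar a : ℝ)) =
      diagonal (fun a : {a : G // 0 < nbar a} => √(nbar a : ℝ)) *
        (diagonal (fun a : {a : G // 0 < nbar a} => (mOf nbar a : ℝ)) +
          of fun a b : {a : G // 0 < nbar a} => 2 * (nbar (-(a : G) - b) : ℝ) * nbar b) := by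
  ext a b
  rw [mul_diagonal, diagonal_mul, Matrix.add_apply, diagonal_apply, of_apply, Mmat]
  by_cases hab : a = b
  · subst hab
    simp only [if_true, two_nsmul, neg_add']
    ring
  · have hab' : (a : G) ≠ b := fun h => hab (Subtype.ext h)
    simp only [hab, hab', if_false, zero_add, Real.sqrt_mul (Nat.cast_nonneg _)]
    linear_combination (2 * √(nbar a : ℝ) * nbar (-(a : G) - b)) *
      Real.mul_self_sqrt (Nat.cast_nonneg (nbar b))

theorem det_Mmat (nbar : G → ℕ) :
    (Mmat nbar).det = det (diagonal (fun a : {a : G // 0 < nbar a} => (mOf nbar a : ℝ)) +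
      of fun a b : {a : G // 0 < nbar a} => 2 * (nbar (-(a : G) - b) : ℝ) * nbar b) := by
  have hS : (diagonal fun a : {a : G // 0 < nbar a} => √(nbar a : ℝ)).det ≠ 0 := by
    rw [det_diagonal]
    exact prod_ne_zero_iff.2 fun a _ => (Real.sqrt_pos.2 (Nat.cast_pos.2 a.2)).ne'
  have h := congrArg det (Mmat_mul_diagonal_sqrt nbar)
  rw [det_mul, det_mul, mul_comm] at h
  exact mul_left_cancel₀ hS h

variable {n : ℕ} (q : Fin n → G)

theorem gram_cast_eq : (gram n q).map (Int.cast : ℤ → ℝ) =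
    (3 : ℝ) •
      (diagonal ((fun a : {a : G // 0 < cnt q a} => (mOf (cnt q) a : ℝ)) ∘ toSupport q) +
        (of fun (a : {a : G // 0 < cnt q a}) j => 2 * (cnt q (-(a : G) - q j) : ℝ)).submatrix
          (toSupport q) id) := by
  ext i j
  rw [map_apply, gram_apply, Matrix.smul_apply, Matrix.add_apply, diagonal_apply, submatrix_apply,
    of_apply]
  split_ifs <;> simp [toSupport] <;> ring

end Reduction

end CLPaper

open CLPaper

theorem det_gram_eq_general (G : Type*) [AddCommGroup G] [Fintype G]
    (n : ℕ) (q : Fin n → G) :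
    (((gram n q).det : ℝ)
        = 3 ^ n * (Mmat (cnt q)).det *
          ∏ a : {a : G // 0 < cnt q a}, (mOf (cnt q) (a : G) : ℝ) ^ (cnt q (a : G) - 1)) ∧
    (((gram n q).det : ℝ) / ((3 : ℝ) ^ (n + 1) * (n : ℝ) ^ (2 * n))
        = (1 / 3) * ((n : ℝ) ^ (2 * n))⁻¹ * (Mmat (cnt q)).det *
          ∏ a : {a : G // 0 < cnt q a}, (mOf (cnt q) (a : G) : ℝ) ^ (cnt q (a : G) - 1)) := by
  have hdet : ((gram n q).det : ℝ) = 3 ^ n * (Mmat (cnt q)).det *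
      ∏ a : {a : G // 0 < cnt q a}, (mOf (cnt q) (a : G) : ℝ) ^ (cnt q (a : G) - 1) := by
    rw [Int.cast_det, gram_cast_eq, Matrix.det_smul, Fintype.card_fin,
      Matrix.det_diagonal_comp_add_submatrix (toSupport_surjective q)]
    simp only [Matrix.of_apply, sum_toSupport_fiber, card_toSupport_fiber, det_Mmat]
    ring
  refine ⟨hdet, ?_⟩
  rw [hdet, pow_succ, mul_assoc (3 ^ n : ℝ), mul_assoc (3 ^ n : ℝ),
    mul_div_mul_left _ _ (by positivity)]
  ring

/-- `det(B_{n,q}ᵀ B_{n,q}) = 3^n det(M_q) ∏_{a ∈ G₊} m_a^{n_a - 1}`; consequently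
`ℙ(A_n q = 0) = det(B_{n,q}ᵀ B_{n,q})/(3^{n+1} n^{2n}) = (1/3) n^{-2n} det(M_q) ∏_{a∈G₊} m_a^{n_a-1}`. -/
theorem det_gram_eq (G : Type*) [AddCommGroup G] [Fintype G]
    (n : ℕ) (hn : 0 < n) (q : Fin n → G) :
    (((gram n q).det : ℝ)
        = 3 ^ n * (Mmat (cnt q)).det *
          ∏ a : {a : G // 0 < cnt q a}, (mOf (cnt q) (a : G) : ℝ) ^ (cnt q (a : G) - 1)) ∧
    (((gram n q).det : ℝ) / ((3 : ℝ) ^ (n + 1) * (n : ℝ) ^ (2 * n))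
        = (1 / 3) * ((n : ℝ) ^ (2 * n))⁻¹ * (Mmat (cnt q)).det *
          ∏ a : {a : G // 0 < cnt q a}, (mOf (cnt q) (a : G) : ℝ) ^ (cnt q (a : G) - 1)) :=
  det_gram_eq_general G n q
end
end

section
/- For every finite abelian group G and every q ∈ G^n, the matrix M_q is positive semi-definite. -/
open scoped Classical

noncomputable section

open CLPaper

/-! With `s a = √n_a`, `M_q` is the principal submatrix on `G₊` of the matrix
`2 s_a s_b s_{-a-b}² + δ_{ab} ∑_c s_c² s_{-a-c}²` on all of `G`. Expanding the square and using
the cyclic symmetry of sums over triples `a + b + c = 0`, its quadratic form is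
`(1/3) ∑_{a+b+c=0} (s_b s_c x_a + s_a s_c x_b + s_a s_b x_c)² ≥ 0`. -/

open Matrix

namespace CLPaper

variable {G : Type*} [AddCommGroup G] [Fintype G]

def sumZeroTriples {R : Type*} [AddCommMonoid R] (f : G → G → G → R) : R :=
  ∑ p : G × G, f p.1 p.2 (-p.1 - p.2)

lemma sumZeroTriples_rotate {R : Type*} [AddCommMonoid R] (f : G → G → G → R) :
    sumZeroTriples (fun a b c => f b c a) = sumZeroTriples f := by
  have h : ∀ a b : G, -b - (-a - b) = a := fun a b => by abel
  let e : G × G ≃ G × G :=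
    { toFun := fun p => (p.2, -p.1 - p.2)
      invFun := fun p => (-p.1 - p.2, p.1)
      left_inv := fun p => Prod.ext (by dsimp only; abel) rfl
      right_inv := fun p => Prod.ext rfl (by dsimp only; abel) }
  refine Fintype.sum_equiv e _ _ fun p => ?_
  simp [e, h]

lemma sumZeroTriples_cyclic {R : Type*} [AddCommMonoid R] (g : G → G → G → R) :
    sumZeroTriples (fun a b c => g a b c + g b c a + g c a b) = 3 • sumZeroTriples g := by
  have h₁ := sumZeroTriples_rotate g
  have h₂ := sumZeroTriples_rotate fun a b c => g b c a
  simp only [sumZeroTriples, Finset.sum_add_distrib] at h₁ h₂ ⊢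
  rw [h₂, h₁, succ_nsmul, succ_nsmul, one_nsmul]

def tripleGramMatrix (s : G → ℝ) : Matrix G G ℝ :=
  of (fun a b => 2 * s a * s b * s (-a - b) ^ 2) +
    diagonal (fun a => ∑ c, s c ^ 2 * s (-a - c) ^ 2)

lemma tripleGramMatrix_isHermitian (s : G → ℝ) : (tripleGramMatrix s).IsHermitian := by
  refine IsHermitian.add (IsHermitian.ext fun a b => ?_) (isHermitian_diagonal _)
  simp only [of_apply, star_trivial]
  rw [neg_sub_left, add_comm, ← neg_sub_left]
  ring

lemma dotProduct_tripleGramMatrix_mulVec (s x : G → ℝ) :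
    x ⬝ᵥ (tripleGramMatrix s *ᵥ x) =
      sumZeroTriples fun a b c =>
        s b ^ 2 * s c ^ 2 * x a ^ 2 + 2 * s a * s b * s c ^ 2 * x a * x b := by
  simp only [tripleGramMatrix, add_mulVec, dotProduct_add, sumZeroTriples, Fintype.sum_prod_type,
    Finset.sum_add_distrib]
  rw [add_comm]
  congr 1
  · simp only [dotProduct, mulVec_diagonal, Finset.mul_sum, Finset.sum_mul]
    exact Finset.sum_congr rfl fun a _ => Finset.sum_congr rfl fun b _ => by ring
  · simp only [dotProduct, mulVec, of_apply, Finset.mul_sum]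
    exact Finset.sum_congr rfl fun a _ => Finset.sum_congr rfl fun b _ => by ring

theorem tripleGramMatrix_posSemidef (s : G → ℝ) : (tripleGramMatrix s).PosSemidef := by
  refine .of_dotProduct_mulVec_nonneg (tripleGramMatrix_isHermitian s) fun x => ?_
  have hsum : 3 * (x ⬝ᵥ (tripleGramMatrix s *ᵥ x)) =
      sumZeroTriples fun a b c => (s b * s c * x a + s a * s c * x b + s a * s b * x c) ^ 2 := by
    have hcyc := sumZeroTriples_cyclic
      fun a b c => s b ^ 2 * s c ^ 2 * x a ^ 2 + 2 * s a * s b * s c ^ 2 * x a * x b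
    rw [nsmul_eq_mul, Nat.cast_ofNat] at hcyc
    rw [dotProduct_tripleGramMatrix_mulVec, ← hcyc]
    congr; ext a b c; ring
  have hnonneg : 0 ≤ sumZeroTriples fun a b c =>
      (s b * s c * x a + s a * s c * x b + s a * s b * x c) ^ 2 :=
    Finset.sum_nonneg fun _ _ => sq_nonneg _
  rw [star_trivial]
  linarith

lemma Mmat_eq_submatrix (nbar : G → ℕ) :
    Mmat nbar = (tripleGramMatrix fun a => √(nbar a : ℝ)).submatrix Subtype.val Subtype.val := by
  ext a b
  have hsq : ∀ c : G, √(nbar c : ℝ) ^ 2 = nbar c := fun c => Real.sq_sqrt (Nat.cast_nonneg _)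
  simp only [Mmat, submatrix_apply, tripleGramMatrix, Matrix.add_apply, of_apply, diagonal_apply,
    hsq]
  split_ifs with hab
  · rw [← hab, mOf, two_smul, neg_add, ← sub_eq_add_neg, mul_assoc 2 √(nbar a : ℝ),
      Real.mul_self_sqrt (Nat.cast_nonneg _)]
    push_cast
    ring
  · rw [Real.sqrt_mul (Nat.cast_nonneg _), add_zero]
    ring

end CLPaper

/-- The matrix `M_q` is positive semi-definite. -/
theorem Mmat_posSemidef (G : Type*) [AddCommGroup G] [Fintype G]
    (n : ℕ) (q : Fin n → G) :
    (Mmat (cnt q)).PosSemidef := by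
  rw [Mmat_eq_submatrix]
  exact (tripleGramMatrix_posSemidef _).submatrix _
end
end

section
/- Let G be a finite abelian group, H a subgroup of G, and C > 0 a fixed constant. For all sufficiently large n the following holds: if n̄ ∈ B(n,H) and there exists a ∈ G_+ with (−a+H) ∩ G_+ = ∅, then D(ν_{n̄}‖μ_{n̄}) ≥ (log n)/(2n). -/
open scoped Classical

noncomputable section

/-!
Write `r = r_n` and `S = ∑_{b ∉ H} n_b ≤ r`. If `n_b n_{-a-b} > 0`, the hypothesis on the coset
`-a + H`, applied to `b` and to `-a - b`, puts both `b` and `-a - b` outside `H`; hence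
`m_a ≤ S² ≤ r²` and `ν(a)/μ(a) = n_a n / m_a ≥ n / r²`. By Gibbs' inequality every term
`ν(b) log (ν(b)/μ(b))` with `b ≠ a` is at least `ν(b) - μ(b)`, so
`D(ν‖μ) ≥ ν(a) (log (n / r²) - 1)`. Since `r` only grows like `log n`, eventually
`log (n / r²) - 1 ≥ (log n) / 2`, and `ν(a) ≥ 1/n`.
-/

open Real Finset Filter

namespace CLPaper

lemma sub_le_klDiv_term {x y : ℝ} (hx : 0 ≤ x) (hy : 0 ≤ y) (hxy : x ≠ 0 → 0 < y) :
    x - y ≤ if x = 0 then 0 else x * log (x / y) := by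
  split_ifs with h
  · linarith
  · have hx' : 0 < x := lt_of_le_of_ne hx (Ne.symm h)
    have hlog := one_sub_inv_le_log_of_pos (div_pos hx' (hxy h))
    rw [inv_div] at hlog
    calc x - y = x * (1 - y / x) := by field_simp
      _ ≤ x * log (x / y) := by gcongr

lemma mul_log_div_sub_one_le_klDiv {ι : Type*} [Fintype ι] {ν μ : ι → ℝ} (hν : 0 ≤ ν)
    (hμ : 0 ≤ μ) (hsupp : ∀ b, ν b ≠ 0 → 0 < μ b) (hsum : ∑ b, ν b = ∑ b, μ b) {a : ι}
    (ha : ν a ≠ 0) : ν a * (log (ν a / μ a) - 1) ≤ klDiv ν μ := by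
  calc ν a * (log (ν a / μ a) - 1)
      ≤ ν a * log (ν a / μ a) + ∑ b ∈ univ.erase a, (ν b - μ b) := by
        rw [sum_sub_distrib, sum_erase_eq_sub (mem_univ a), sum_erase_eq_sub (mem_univ a), hsum, mul_sub, mul_one]
        have hμa : 0 ≤ μ a := hμ a
        linarith
    _ ≤ klDiv ν μ := by
        rw [klDiv, ← add_sum_erase _ _ (mem_univ a), if_neg ha]
        gcongr with b
        exact sub_le_klDiv_term (hν b) (hμ b) (hsupp b)

variable {G : Type*} [AddCommGroup G] [Fintype G]

lemma sum_mOf (nbar : G → ℕ) : ∑ a, mOf nbar a = (∑ a, nbar a) ^ 2 := by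
  have hshift : ∀ b : G, ∑ a, nbar (-a - b) = ∑ a, nbar a := fun b =>
    Fintype.sum_equiv (Equiv.subLeft (-b)) _ _ fun a => by
      simp only [Equiv.subLeft_apply]; congr 1; abel
  simp only [mOf]
  rw [sum_comm, sq, sum_mul]
  simp only [← mul_sum, hshift]

lemma klDiv_nuOf_muOf_ge {n : ℕ} {nbar : G → ℕ} (hsum : ∑ a, nbar a = n) (hn : n ≠ 0)
    (hm : ∀ a, 0 < nbar a → 0 < mOf nbar a) {a : G} (ha : 0 < nbar a) :
    nuOf n nbar a * (log (nuOf n nbar a / muOf n nbar a) - 1) ≤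
      klDiv (nuOf n nbar) (muOf n nbar) := by
  have hnR : (n : ℝ) ≠ 0 := Nat.cast_ne_zero.2 hn
  refine mul_log_div_sub_one_le_klDiv (fun b => by unfold nuOf; positivity)
    (fun b => by unfold muOf; positivity) (fun b hb => ?_) ?_ ?_
  · have hb : 0 < nbar b := Nat.pos_of_ne_zero fun h => hb (by simp [nuOf, h])
    have := hm b hb
    unfold muOf; positivity
  · have hm2 : (∑ b, (mOf nbar b : ℝ)) = (n : ℝ) ^ 2 := by
      exact_mod_cast (sum_mOf nbar).trans (by rw [hsum])
    simp only [nuOf, muOf, ← sum_div, hm2]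
    rw [← Nat.cast_sum, hsum, div_self hnR, div_self (pow_ne_zero 2 hnR)]
  · simp only [nuOf]; positivity

lemma div_sq_le_nuOf_div_muOf {n : ℕ} (hn : n ≠ 0) {nbar : G → ℕ} {a : G} (ha : 0 < nbar a)
    (hma : 0 < mOf nbar a) {r : ℝ} (hmr : (mOf nbar a : ℝ) ≤ r ^ 2) :
    (n : ℝ) / r ^ 2 ≤ nuOf n nbar a / muOf n nbar a := by
  have hnR : (n : ℝ) ≠ 0 := Nat.cast_ne_zero.2 hn
  have hmaR : (0 : ℝ) < mOf nbar a := Nat.cast_pos.2 hma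
  have hna : (1 : ℝ) ≤ nbar a := Nat.one_le_cast.2 ha
  calc (n : ℝ) / r ^ 2 ≤ n / mOf nbar a := by gcongr
    _ ≤ nbar a * n / mOf nbar a := by gcongr; nlinarith
    _ = nuOf n nbar a / muOf n nbar a := by simp only [nuOf, muOf]; field_simp

lemma mOf_le_sq_of_forall_add_notMem (H : AddSubgroup G) {nbar : G → ℕ} {a : G}
    (hcoset : ∀ b, 0 < nbar b → b + a ∉ H) :
    mOf nbar a ≤ (∑ b ∈ univ.filter (fun b : G => b ∉ H), nbar b) ^ 2 := by
  set S := ∑ b ∈ univ.filter (fun b : G => b ∉ H), nbar b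
  have hterm : ∀ b, nbar b * nbar (-a - b) ≤ (if b ∉ H then nbar b else 0) * S := by
    intro b
    by_cases h0 : nbar b * nbar (-a - b) = 0
    · rw [h0]; exact Nat.zero_le _
    obtain ⟨hb, hc⟩ := mul_ne_zero_iff.1 h0
    have hbH : b ∉ H := fun h =>
      hcoset _ (Nat.pos_of_ne_zero hc) (by rw [show -a - b + a = -b by abel]; exact neg_mem h)
    have hcH : -a - b ∉ H := fun h =>
      hcoset b (Nat.pos_of_ne_zero hb) (by rw [show b + a = -(-a - b) by abel]; exact neg_mem h)
    rw [if_pos hbH]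
    exact Nat.mul_le_mul_left _ (single_le_sum (fun _ _ => Nat.zero_le _) (by simpa using hcH))
  calc mOf nbar a ≤ ∑ b, (if b ∉ H then nbar b else 0) * S := sum_le_sum fun b _ => hterm b
    _ = S ^ 2 := by rw [← sum_mul, ← sum_filter, sq]

lemma eventually_two_mul_log_const_mul_add_one_le (K : ℝ) :
    ∀ᶠ L in atTop, 2 * log (K * L) + 1 ≤ L / 2 := by
  have hlog : ∀ᶠ L in atTop, log L ≤ L / 8 := by
    filter_upwards [isLittleO_log_id_atTop.bound (by norm_num : (0 : ℝ) < 1 / 8),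
      eventually_ge_atTop 0] with L hL hL0
    rw [norm_eq_abs, norm_eq_abs, id, abs_of_nonneg hL0] at hL
    linarith [le_abs_self (log L)]
  filter_upwards [hlog, eventually_gt_atTop 0, eventually_ge_atTop (8 * log K + 6)]
    with L hlogL hL0 hL
  rcases eq_or_ne K 0 with rfl | hK
  · rw [zero_mul, log_zero] at *; linarith
  · rw [log_mul hK hL0.ne']; linarith

lemma eventually_two_mul_log_rSeq_add_one_le (G : Type*) [Fintype G] (C : ℝ) :
    ∀ᶠ n : ℕ in atTop, 0 < log n ∧ 2 * log (rSeq G C n) + 1 ≤ log n / 2 :=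
  (tendsto_log_atTop.comp tendsto_natCast_atTop_atTop).eventually
    ((eventually_gt_atTop 0).and
      (eventually_two_mul_log_const_mul_add_one_le (4 * C * Fintype.card G)))

end CLPaper

open CLPaper

theorem klDiv_ge_of_empty_coset_general (G : Type*) [AddCommGroup G] [Fintype G]
    (H : AddSubgroup G) (C : ℝ) :
    ∃ N : ℕ, ∀ n ≥ N, ∀ nbar : G → ℕ, memB C n H nbar →
      (∃ a : G, 0 < nbar a ∧ ∀ b : G, 0 < nbar b → b + a ∉ H) →
      klDiv (nuOf n nbar) (muOf n nbar) ≥ Real.log n / (2 * n) := by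
  obtain ⟨N, hN⟩ := eventually_atTop.1 (eventually_two_mul_log_rSeq_add_one_le G C)
  refine ⟨N, fun n hn nbar hB ⟨a, ha, hcoset⟩ => ?_⟩
  obtain ⟨⟨⟨hsum, -⟩, hm⟩, -, hS⟩ := hB
  obtain ⟨hL, hr⟩ := hN n hn
  set r := rSeq G C n
  have hn0 : n ≠ 0 := by rintro rfl; simp at hL
  have hma : 0 < mOf nbar a := hm a ha
  have hmr : (mOf nbar a : ℝ) ≤ r ^ 2 :=
    calc (mOf nbar a : ℝ) ≤ (∑ b ∈ univ.filter (fun b : G => b ∉ H), (nbar b : ℝ)) ^ 2 := by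
          exact_mod_cast mOf_le_sq_of_forall_add_notMem H hcoset
      _ ≤ r ^ 2 := pow_le_pow_left₀ (by positivity) hS 2
  have hlog : log n / 2 ≤ log (nuOf n nbar a / muOf n nbar a) - 1 := by
    have hr0 : r ≠ 0 := by rintro h; rw [h] at hmr; simp at hmr; omega
    have := log_le_log (by positivity) (div_sq_le_nuOf_div_muOf hn0 ha hma hmr)
    rw [log_div (Nat.cast_ne_zero.2 hn0) (pow_ne_zero 2 hr0), log_pow, Nat.cast_two] at this
    linarith
  have hνa : 1 / (n : ℝ) ≤ nuOf n nbar a := by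
    unfold nuOf; gcongr; exact_mod_cast ha
  calc log n / (2 * n) = 1 / n * (log n / 2) := by ring
    _ ≤ nuOf n nbar a * (log (nuOf n nbar a / muOf n nbar a) - 1) :=
        mul_le_mul hνa hlog (by linarith) (hνa.trans' (by positivity))
    _ ≤ klDiv (nuOf n nbar) (muOf n nbar) := klDiv_nuOf_muOf_ge hsum hn0 hm ha

/-- **Lemma (extra log).** For large `n`, if `n̄ ∈ B(n,H)` and some `a ∈ G₊` has
`(-a+H) ∩ G₊ = ∅`, then `D(ν_{n̄}‖μ_{n̄}) ≥ log n / (2n)`. -/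
theorem klDiv_ge_of_empty_coset (G : Type*) [AddCommGroup G] [Fintype G]
    (H : AddSubgroup G) (C : ℝ) (hC : 0 < C) :
    ∃ N : ℕ, ∀ n ≥ N, ∀ nbar : G → ℕ, memB C n H nbar →
      (∃ a : G, 0 < nbar a ∧ ∀ b : G, 0 < nbar b → b + a ∉ H) →
      klDiv (nuOf n nbar) (muOf n nbar) ≥ Real.log n / (2 * n) :=
  klDiv_ge_of_empty_coset_general G H C
end
end

section
/- Let G = ℤ/2ℤ and, for n ≥ 2, let n̄ be the counts vector with n_{0̄} = n−1 and n_{1̄} = 1. Then E(n̄) = (4(n−1)³/n³) · (1 − 2/n + 2/n²)^{n−2}; in particular, E(n̄) → 4e^{−2} as n → ∞. -/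
/-!
The counts `n₀ = n - 1`, `n₁ = 1` force `q = Pi.single s 1` for one of the `n` coordinates `s`,
so `E(n̄) = n · det (gram n q) / (3^{n+1} n^{2n})`. Over `ℤ/2ℤ` one has
`2 · [a + b + c = 0] = 1 + (-1)^a (-1)^b (-1)^c`, so every entry of `2 · gram n q` is a sum over
`[n]³` of products of functions of one coordinate each, which factorizes. For `q = Pi.single s 1`
this exhibits the Gram matrix as `t • 1` plus a rank-two matrix supported on `span {𝟙, e_s}`, with
`t = 3(n² - 2n + 2)`; the Weinstein–Aronszajn identity reduces its determinant to a `2 × 2` one and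
gives `det = 108 (n - 1)³ t^{n-2}`. The limit is `(1 + c/n + o(1/n))^n → e^c`.
-/

open scoped Classical

noncomputable section

open CLPaper Filter

namespace CLPaper

open Matrix Finset Topology

section TripleSums

variable {ι R : Type*} [Fintype ι] [CommSemiring R]

theorem sum_triple_mul (f g h : ι → R) :
    ∑ x : ι × ι × ι, f x.1 * g x.2.1 * h x.2.2 = (∑ i, f i) * (∑ i, g i) * (∑ i, h i) := by
  simp only [Fintype.sum_prod_type, ← Finset.mul_sum, ← Finset.sum_mul]

theorem sum_triple_add_mul_add_mul_prod (u v w : ι → R) :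
    ∑ x : ι × ι × ι, (u x.1 + u x.2.1 + u x.2.2) * (v x.1 + v x.2.1 + v x.2.2) *
        (w x.1 * w x.2.1 * w x.2.2)
      = 3 * (∑ i, u i * v i * w i) * (∑ i, w i) ^ 2
        + 6 * ((∑ i, u i * w i) * (∑ i, v i * w i) * (∑ i, w i)) := by
  let uvw := fun i => u i * v i * w i
  let uw := fun i => u i * w i
  let vw := fun i => v i * w i
  have expand : ∀ x : ι × ι × ι,
      (u x.1 + u x.2.1 + u x.2.2) * (v x.1 + v x.2.1 + v x.2.2) * (w x.1 * w x.2.1 * w x.2.2)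
        = uvw x.1 * w x.2.1 * w x.2.2 + w x.1 * uvw x.2.1 * w x.2.2
          + w x.1 * w x.2.1 * uvw x.2.2 + uw x.1 * vw x.2.1 * w x.2.2
          + vw x.1 * uw x.2.1 * w x.2.2 + uw x.1 * w x.2.1 * vw x.2.2
          + vw x.1 * w x.2.1 * uw x.2.2 + w x.1 * uw x.2.1 * vw x.2.2
          + w x.1 * vw x.2.1 * uw x.2.2 := fun x => by simp only [uvw, uw, vw]; ring
  simp only [expand, Finset.sum_add_distrib, sum_triple_mul]
  ring

end TripleSums

theorem det_smul_one_add_mul_comm {K m p : Type*} [Field K] [Fintype m] [DecidableEq m]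
    [Fintype p] [DecidableEq p] {t : K} (ht : t ≠ 0) (U : Matrix m p K) (V : Matrix p m K) :
    t ^ Fintype.card p * (t • 1 + U * V).det = t ^ Fintype.card m * (t • 1 + V * U).det := by
  have hUV : t • 1 + U * V = t • (1 + (t⁻¹ • U) * V) := by
    rw [smul_add, Matrix.smul_mul, smul_smul, mul_inv_cancel₀ ht, one_smul]
  have hVU : t • 1 + V * U = t • (1 + V * (t⁻¹ • U)) := by
    rw [smul_add, Matrix.mul_smul, smul_smul, mul_inv_cancel₀ ht, one_smul]
  rw [hUV, hVU, det_smul, det_smul, det_one_add_mul_comm]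
  ring

theorem tendsto_one_add_pow_sub_exp_of_tendsto (k : ℕ) {g : ℕ → ℝ} {t : ℝ}
    (hg : Tendsto (fun n => n * g n) atTop (𝓝 t)) :
    Tendsto (fun n => (1 + g n) ^ (n - k)) atTop (𝓝 (Real.exp t)) := by
  rw [← tendsto_add_atTop_iff_nat k]
  simp only [Nat.add_sub_cancel]
  apply Real.tendsto_one_add_pow_exp_of_tendsto
  have hshift : Tendsto (fun n : ℕ => ((n : ℝ) + k) * g (n + k)) atTop (𝓝 t) := by
    simpa using (tendsto_add_atTop_iff_nat k).mpr hg
  have hprod := (tendsto_natCast_div_add_atTop (k : ℝ)).mul hshift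
  rw [one_mul] at hprod
  refine hprod.congr' ?_
  filter_upwards [eventually_ne_atTop 0] with n hn
  have : (n : ℝ) + k ≠ 0 := by positivity
  field_simp

variable {n : ℕ}

-- Stated for an arbitrary `Decidable` instance since `gram` filters with classical decidability.
theorem two_mul_ite_add_add_eq_zero (a b c : ZMod 2) [Decidable (a + b + c = 0)] (z : ℤ) :
    2 * (if a + b + c = 0 then z else 0)
      = (1 + (-1) ^ a.val * (-1) ^ b.val * (-1) ^ c.val) * z := by
  fin_cases a <;> fin_cases b <;> fin_cases c <;> simp +decide

theorem gram_apply_s19 {G : Type*} [AddCommGroup G] [Fintype G] (q : Fin n → G) (j k : Fin n) :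
    gram n q j k = ∑ x, if q x.1 + q x.2.1 + q x.2.2 = 0 then B n x j * B n x k else 0 := by
  rw [← Finset.sum_filter]
  simp only [gram, Bq, mul_apply, transpose_apply]
  exact (Finset.sum_subtype _ (fun x => Finset.mem_filter_univ x) (fun x => B n x j * B n x k)).symm

def sgn (q : Fin n → ZMod 2) (i : Fin n) : ℤ := (-1) ^ (q i).val

theorem two_mul_gram_apply (q : Fin n → ZMod 2) (j k : Fin n) :
    2 * gram n q j k
      = 3 * (if j = k then (n : ℤ) ^ 2 + sgn q j * (∑ i, sgn q i) ^ 2 else 0)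
        + 6 * (n + sgn q j * sgn q k * ∑ i, sgn q i) := by
  let e : Fin n → Fin n → ℤ := fun a i => if i = a then 1 else 0
  have hB : ∀ x j, B n x j = e j x.1 + e j x.2.1 + e j x.2.2 := fun _ _ => rfl
  have hsplit : 2 * gram n q j k
      = ∑ x : Fin n × Fin n × Fin n,
          (e j x.1 + e j x.2.1 + e j x.2.2) * (e k x.1 + e k x.2.1 + e k x.2.2) *
            ((1 : Fin n → ℤ) x.1 * (1 : Fin n → ℤ) x.2.1 * (1 : Fin n → ℤ) x.2.2)
        + ∑ x : Fin n × Fin n × Fin n,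
          (e j x.1 + e j x.2.1 + e j x.2.2) * (e k x.1 + e k x.2.1 + e k x.2.2) *
            (sgn q x.1 * sgn q x.2.1 * sgn q x.2.2) := by
    rw [gram_apply_s19, Finset.mul_sum, ← Finset.sum_add_distrib]
    refine Finset.sum_congr rfl fun x _ => ?_
    rw [two_mul_ite_add_add_eq_zero, hB, hB]
    simp only [sgn, Pi.one_apply]
    ring
  rw [hsplit, sum_triple_add_mul_add_mul_prod, sum_triple_add_mul_add_mul_prod]
  simp only [e, mul_ite, mul_one, mul_zero, Pi.one_apply, sum_ite_eq', mem_univ, ↓reduceIte,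
    sum_const, card_univ, Fintype.card_fin, Int.nsmul_eq_mul, ite_mul, zero_mul, one_mul]
  rcases eq_or_ne j k with rfl | hjk
  · rw [if_pos rfl, if_pos rfl, if_pos rfl]; ring
  · rw [if_neg hjk.symm, if_neg hjk.symm, if_neg hjk]; ring

theorem sgn_single (s i : Fin n) : sgn (Pi.single s (1 : ZMod 2)) i = if i = s then -1 else 1 := by
  by_cases h : i = s <;> simp [sgn, h, ZMod.val_one]

theorem sum_sgn_single (s : Fin n) : ∑ i, sgn (Pi.single s (1 : ZMod 2)) i = n - 2 := by
  have h : ∀ i, sgn (Pi.single s (1 : ZMod 2)) i = 1 - 2 * if i = s then 1 else 0 := fun i => by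
    rw [sgn_single]; split_ifs <;> ring
  simp [h, Finset.sum_sub_distrib]

def onesAndSingle (s : Fin n) : Matrix (Fin n) (Fin 2) ℝ :=
  of fun i => ![1, if i = s then 1 else 0]

theorem onesAndSingle_mul_mul_transpose_apply (s : Fin n) (C : Matrix (Fin 2) (Fin 2) ℝ)
    (j k : Fin n) :
    (onesAndSingle s * C * (onesAndSingle s)ᵀ) j k
      = C 0 0 + C 0 1 * (if k = s then 1 else 0) + (if j = s then 1 else 0) * C 1 0
        + (if j = s then 1 else 0) * C 1 1 * (if k = s then 1 else 0) := by
  simp only [onesAndSingle, mul_apply, of_apply, transpose_apply, Fin.sum_univ_two, cons_val_zero,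
    cons_val_one, cons_val_fin_one]
  split_ifs <;> ring

theorem transpose_onesAndSingle_mul_self (s : Fin n) :
    (onesAndSingle s)ᵀ * onesAndSingle s = !![(n : ℝ), 1; 1, 1] := by
  ext p r
  fin_cases p <;> fin_cases r <;> simp [onesAndSingle, mul_apply]

theorem gram_single_map (s : Fin n) :
    (gram n (Pi.single s (1 : ZMod 2))).map (Int.cast : ℤ → ℝ)
      = (3 * ((n : ℝ) ^ 2 - 2 * n + 2)) • 1 + onesAndSingle s *
          !![6 * ((n : ℝ) - 1), -6 * ((n : ℝ) - 2); -6 * ((n : ℝ) - 2), -3 * ((n : ℝ) - 2) * ((n : ℝ) - 6)]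
            * (onesAndSingle s)ᵀ := by
  ext j k
  have h := two_mul_gram_apply (Pi.single s (1 : ZMod 2)) j k
  rw [sum_sgn_single, sgn_single, sgn_single] at h
  have hR : (2 : ℝ) * gram n (Pi.single s (1 : ZMod 2)) j k
      = 3 * (if j = k then (n : ℝ) ^ 2 + (if j = s then -1 else 1) * ((n : ℝ) - 2) ^ 2 else 0)
        + 6 * (n + (if j = s then -1 else 1) * (if k = s then -1 else 1) * ((n : ℝ) - 2)) := by
    exact_mod_cast h
  simp only [map_apply, neg_mul, Matrix.add_apply, Matrix.smul_apply, one_apply, smul_eq_mul,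
    mul_ite, mul_one, mul_zero, onesAndSingle_mul_mul_transpose_apply, Fin.isValue, of_apply,
    cons_val', cons_val_zero, cons_val_fin_one, cons_val_one, mul_neg, ite_mul, one_mul, zero_mul]
  split_ifs at hR ⊢ <;> subst_vars <;> first | linarith | contradiction

theorem det_gram_single (hn : 2 ≤ n) (s : Fin n) :
    ((gram n (Pi.single s (1 : ZMod 2))).det : ℝ)
      = 108 * ((n : ℝ) - 1) ^ 3 * (3 * ((n : ℝ) ^ 2 - 2 * n + 2)) ^ (n - 2) := by
  rw [Int.cast_det, gram_single_map]
  set t : ℝ := 3 * ((n : ℝ) ^ 2 - 2 * n + 2)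
  set C : Matrix (Fin 2) (Fin 2) ℝ :=
    !![6 * ((n : ℝ) - 1), -6 * ((n : ℝ) - 2); -6 * ((n : ℝ) - 2), -3 * ((n : ℝ) - 2) * ((n : ℝ) - 6)]
  have ht : t ≠ 0 := by
    have : 0 < t := by nlinarith [sq_nonneg ((n : ℝ) - 1)]
    exact this.ne'
  have hcomm := det_smul_one_add_mul_comm ht (onesAndSingle s) (C * (onesAndSingle s)ᵀ)
  have h2 : (t • 1 + C * !![(n : ℝ), 1; 1, 1]).det = 108 * ((n : ℝ) - 1) ^ 3 := by
    simp only [C, t, det_fin_two, one_fin_two, mul_fin_two, smul_of, of_add_of, of_apply,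
      smul_cons, smul_eq_mul, Matrix.smul_empty, Pi.add_apply, cons_val_zero, cons_val_one,
      cons_val_fin_one]
    ring
  rw [Matrix.mul_assoc, transpose_onesAndSingle_mul_self, ← Matrix.mul_assoc, h2,
    Fintype.card_fin, Fintype.card_fin] at hcomm
  obtain ⟨m, rfl⟩ : ∃ m, n = m + 2 := ⟨n - 2, by omega⟩
  apply mul_left_cancel₀ (pow_ne_zero 2 ht)
  rw [hcomm, Nat.add_sub_cancel]
  ring

theorem cnt_eq_card_filter {G : Type*} [DecidableEq G] (q : Fin n → G) (a : G) :
    cnt q a = #{i | q i = a} := by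
  rw [cnt]
  convert rfl

theorem cnt_zero_add_cnt_one (q : Fin n → ZMod 2) : cnt q 0 + cnt q 1 = n := by
  have h : ∀ a : ZMod 2, a ≠ 0 ↔ a = 1 := by decide
  have := Finset.card_filter_add_card_filter_not (s := (univ : Finset (Fin n))) (fun i => q i = 0)
  simpa [cnt_eq_card_filter, h] using this

theorem cnt_one_eq_one_iff (q : Fin n → ZMod 2) :
    cnt q 1 = 1 ↔ ∃ s, q = Pi.single s 1 := by
  rw [cnt_eq_card_filter, Finset.card_eq_one]
  constructor
  · rintro ⟨s, hs⟩
    refine ⟨s, funext fun i => ?_⟩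
    have hi : q i = 1 ↔ i = s := by simpa using Finset.ext_iff.mp hs i
    rw [Pi.single_apply]
    split_ifs with his
    · exact hi.mpr his
    · have h : ∀ a : ZMod 2, a ≠ 1 → a = 0 := by decide
      exact h _ (mt hi.mp his)
  · rintro ⟨s, rfl⟩
    exact ⟨s, by ext i; simp [Pi.single_apply]⟩

theorem Sset_eq_image_single :
    Sset n (fun a : ZMod 2 => if a = 0 then n - 1 else 1)
      = Finset.univ.image fun s => Pi.single s 1 := by
  ext q
  simp only [Sset, Finset.mem_filter, Finset.mem_univ, true_and, Finset.mem_image]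
  constructor
  · intro h
    obtain ⟨s, rfl⟩ := (cnt_one_eq_one_iff q).mp (by simpa using h 1)
    exact ⟨s, rfl⟩
  · rintro ⟨s, rfl⟩ a
    have h1 : cnt (Pi.single s (1 : ZMod 2)) 1 = 1 := (cnt_one_eq_one_iff _).mpr ⟨s, rfl⟩
    have h01 := cnt_zero_add_cnt_one (Pi.single s (1 : ZMod 2))
    obtain rfl | rfl : a = 0 ∨ a = 1 := by revert a; decide
    · rw [if_pos rfl]; omega
    · rw [if_neg one_ne_zero, h1]

theorem Eval_single_eq (hn : 2 ≤ n) :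
    Eval n (fun a : ZMod 2 => if a = 0 then n - 1 else 1)
      = (4 * ((n : ℝ) - 1) ^ 3 / (n : ℝ) ^ 3) * (1 - 2 / (n : ℝ) + 2 / (n : ℝ) ^ 2) ^ (n - 2) := by
  have hinj : Function.Injective fun s : Fin n => Pi.single s (1 : ZMod 2) := fun s s' h => by
    simpa [Pi.single_apply, eq_comm] using congrFun h s'
  rw [Eval, Sset_eq_image_single, sum_image fun s _ s' _ h => hinj h]
  simp only [det_gram_single hn, sum_const, card_univ, Fintype.card_fin, nsmul_eq_mul]
  have hn0 : (n : ℝ) ≠ 0 := by positivity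
  have hbase : 1 - 2 / (n : ℝ) + 2 / (n : ℝ) ^ 2 = ((n : ℝ) ^ 2 - 2 * n + 2) / (n : ℝ) ^ 2 := by
    field_simp
  rw [hbase, div_pow, mul_pow]
  obtain ⟨m, rfl⟩ : ∃ m, n = m + 2 := ⟨n - 2, by omega⟩
  rw [Nat.add_sub_cancel]
  field_simp
  ring

theorem tendsto_Eval_single :
    Tendsto (fun n : ℕ => Eval n (fun a : ZMod 2 => if a = 0 then n - 1 else 1))
      atTop (𝓝 (4 * Real.exp (-2))) := by
  have hinv := tendsto_one_div_atTop_nhds_zero_nat (𝕜 := ℝ)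
  have hcube : Tendsto (fun n : ℕ => 4 * ((n : ℝ) - 1) ^ 3 / (n : ℝ) ^ 3) atTop (𝓝 4) := by
    have h := ((tendsto_const_nhds (x := (1 : ℝ))).sub hinv).pow 3 |>.const_mul 4
    rw [sub_zero, one_pow, mul_one] at h
    refine h.congr' ?_
    filter_upwards [eventually_ne_atTop 0] with n hn
    field_simp
  have hpow : Tendsto (fun n : ℕ => (1 - 2 / (n : ℝ) + 2 / (n : ℝ) ^ 2) ^ (n - 2)) atTop
      (𝓝 (Real.exp (-2))) := by
    have hg : Tendsto (fun n : ℕ => (n : ℝ) * (-2 / n + 2 / n ^ 2)) atTop (𝓝 (-2)) := by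
      have h := (tendsto_const_nhds (x := (-2 : ℝ))).add (hinv.const_mul 2)
      rw [mul_zero, add_zero] at h
      refine h.congr' ?_
      filter_upwards [eventually_ne_atTop 0] with n hn
      field_simp
    refine (tendsto_one_add_pow_sub_exp_of_tendsto 2 hg).congr fun n => ?_
    congr 1
    ring
  refine (hcube.mul hpow).congr' ?_
  filter_upwards [eventually_ge_atTop 2] with n hn
  exact (Eval_single_eq hn).symm

end CLPaper

/-- For `G = ℤ/2ℤ` and the counts vector `n_{0̄} = n-1`, `n_{1̄} = 1`, one has
`E(n̄) = (4(n-1)³/n³)(1 - 2/n + 2/n²)^{n-2}`, which tends to `4e^{-2}`. -/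
theorem Eval_zmod_two :
    (∀ n : ℕ, 2 ≤ n →
      Eval n (fun a : ZMod 2 => if a = 0 then n - 1 else 1)
        = (4 * ((n : ℝ) - 1) ^ 3 / (n : ℝ) ^ 3) *
            (1 - 2 / (n : ℝ) + 2 / (n : ℝ) ^ 2) ^ (n - 2)) ∧
    Tendsto (fun n : ℕ => Eval n (fun a : ZMod 2 => if a = 0 then n - 1 else 1))
      atTop (nhds (4 * Real.exp (-2))) :=
  ⟨fun _ hn => Eval_single_eq hn, tendsto_Eval_single⟩
end
end
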